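/- arXiv:2006.14184 — 4 statements merged into one kernel-verified Lean document; each statement's English description precedes it below -/
import Mathlib

section
/- Let x : [0,∞) → ℝ be a nondecreasing, nonnegative function, and define the payment p(θ) = θ·x(θ) − ∫₀^θ x(z) dz. Then for every true type θ and every report θ', the utility from truthful reporting θ·x(θ) − p(θ) is at least the utility from misreporting θ·x(θ') − p(θ'). (Strategy-proofness of the Myerson payment rule.) -/
/-! The gain of reporting `θ` truthfully over reporting `θ'` is `∫ z in θ'..θ, (x z - x θ')`,
nonnegative in either order of `θ, θ'` because `x` is monotone. -/

open Set intervalIntegral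

-- Also for `b < a`, where both sides are minus their counterparts on `[b, a]`.
theorem MonotoneOn.sub_mul_le_intervalIntegral {f : ℝ → ℝ} {a b : ℝ}
    (hf : MonotoneOn f (uIcc a b)) (hint : IntervalIntegrable f MeasureTheory.volume a b) :
    (b - a) * f a ≤ ∫ z in a..b, f z := by
  rcases le_total a b with hab | hba
  · have hconst : ∫ _ in a..b, f a ≤ ∫ z in a..b, f z :=
      integral_mono_on hab intervalIntegrable_const hint fun z hz =>
        hf left_mem_uIcc (Icc_subset_uIcc hz) hz.1
    simpa [mul_comm] using hconst
  · have hconst : ∫ z in b..a, f z ≤ ∫ _ in b..a, f a :=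
      integral_mono_on hba hint.symm intervalIntegrable_const fun z hz =>
        hf (Icc_subset_uIcc' hz) left_mem_uIcc hz.2
    rw [integral_const, smul_eq_mul] at hconst
    rw [integral_symm]
    linarith

theorem myerson_sp_general
    (x : ℝ → ℝ) (hmono : MonotoneOn x (Set.Ici 0))
    (hint : ∀ θ ∈ Set.Ici (0:ℝ), IntervalIntegrable x MeasureTheory.volume 0 θ)
    (p : ℝ → ℝ)
    (hp : ∀ θ, p θ = θ * x θ - ∫ z in (0:ℝ)..θ, x z) :
    ∀ θ ∈ Set.Ici (0:ℝ), ∀ θ' ∈ Set.Ici (0:ℝ),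
      θ * x θ' - p θ' ≤ θ * x θ - p θ := by
  intro θ hθ θ' hθ'
  have hmono' : MonotoneOn x (uIcc θ' θ) := hmono.mono (ordConnected_Ici.uIcc_subset hθ' hθ)
  have hbound := hmono'.sub_mul_le_intervalIntegral ((hint θ' hθ').symm.trans (hint θ hθ))
  have hsplit := integral_interval_sub_left (hint θ hθ) (hint θ' hθ')
  rw [hp, hp]
  linarith

theorem myerson_sp
    (x : ℝ → ℝ) (hmono : MonotoneOn x (Set.Ici 0))
    (hnn : ∀ θ ∈ Set.Ici (0:ℝ), 0 ≤ x θ)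
    (hint : ∀ θ ∈ Set.Ici (0:ℝ), IntervalIntegrable x MeasureTheory.volume 0 θ)
    (p : ℝ → ℝ)
    (hp : ∀ θ, p θ = θ * x θ - ∫ z in (0:ℝ)..θ, x z) :
    ∀ θ ∈ Set.Ici (0:ℝ), ∀ θ' ∈ Set.Ici (0:ℝ),
      θ * x θ' - p θ' ≤ θ * x θ - p θ :=
  myerson_sp_general x hmono hint p hp
end

section
/- Suppose x and p satisfy strategy-proofness (for all θ, θ': θ·x(θ) − p(θ) ≥ θ·x(θ') − p(θ')), x is differentiable, p is differentiable, and p(0) = 0, x(0)·0 = 0. Then for all θ ≥ 0, p(θ) = θ·x(θ) − ∫₀^θ x(z) dz. (Uniqueness of the payment rule.) -/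
/-!
Strategy-proofness makes `θ' ↦ θ * x θ' - p θ'` maximal at `θ' = θ`, so at every interior type
`p' θ = θ * x' θ`. Hence `p θ - θ * x θ + ∫₀^θ x` has zero derivative on `(0, ∞)`; by the mean
value theorem (which needs no information at the boundary type `0`) it is constant on `[0, θ]`,
where it equals `p 0 = 0`.
-/

open Set Filter Topology

def IsStrategyProofOn (x p : ℝ → ℝ) (s : Set ℝ) : Prop :=
  ∀ θ ∈ s, ∀ θ' ∈ s, θ * x θ' - p θ' ≤ θ * x θ - p θ

theorem IsStrategyProofOn.isLocalMax {x p : ℝ → ℝ} {s : Set ℝ} {θ : ℝ}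
    (h : IsStrategyProofOn x p s) (hθ : s ∈ 𝓝 θ) :
    IsLocalMax (fun θ' => θ * x θ' - p θ') θ :=
  eventually_of_mem hθ fun θ' hθ' => h θ (mem_of_mem_nhds hθ) θ' hθ'

theorem IsStrategyProofOn.deriv_eq_mul_deriv {x p : ℝ → ℝ} {s : Set ℝ} {θ : ℝ}
    (h : IsStrategyProofOn x p s) (hθ : s ∈ 𝓝 θ)
    (hx : DifferentiableAt ℝ x θ) (hp : DifferentiableAt ℝ p θ) :
    deriv p θ = θ * deriv x θ := by
  have := (h.isLocalMax hθ).hasDerivAt_eq_zero ((hx.hasDerivAt.const_mul θ).sub hp.hasDerivAt)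
  linarith

theorem hasDerivAt_sub_mul_add_integral {x p : ℝ → ℝ} {a t : ℝ} (hx : Continuous x)
    (hxt : DifferentiableAt ℝ x t) (hpt : DifferentiableAt ℝ p t) :
    HasDerivAt (fun s => p s - s * x s + ∫ z in a..s, x z) (deriv p t - t * deriv x t) t := by
  have hint : HasDerivAt (fun s => ∫ z in a..s, x z) (x t) t :=
    intervalIntegral.integral_hasDerivAt_right (hx.intervalIntegrable _ _)
      (hx.stronglyMeasurableAtFilter _ _) hx.continuousAt
  refine ((hpt.hasDerivAt.sub ((hasDerivAt_id' t).mul hxt.hasDerivAt)).add hint).congr_deriv ?_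
  ring

theorem eq_of_hasDerivAt_zero_on_Ioo {f : ℝ → ℝ} {a b : ℝ} (hab : a ≤ b)
    (hf : ContinuousOn f (Icc a b)) (hf' : ∀ t ∈ Ioo a b, HasDerivAt f 0 t) : f b = f a := by
  rcases hab.eq_or_lt with rfl | hab
  · rfl
  obtain ⟨c, -, hslope⟩ := exists_hasDerivAt_eq_slope f (fun _ => 0) hab hf hf'
  have := (div_eq_zero_iff.mp hslope.symm).resolve_right (sub_ne_zero.mpr hab.ne')
  linarith

theorem payment_uniqueness_general
    (x p : ℝ → ℝ)
    (hsp : ∀ θ ∈ Set.Ici (0:ℝ), ∀ θ' ∈ Set.Ici (0:ℝ),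
      θ * x θ' - p θ' ≤ θ * x θ - p θ)
    (hx : Differentiable ℝ x) (hpdiff : Differentiable ℝ p)
    (hp0 : p 0 = 0) :
    ∀ θ ∈ Set.Ici (0:ℝ), p θ = θ * x θ - ∫ z in (0:ℝ)..θ, x z := by
  intro θ hθ
  have hres t := hasDerivAt_sub_mul_add_integral (a := 0) hx.continuous (hx t) (hpdiff t)
  have hfoc : ∀ t ∈ Ioo 0 θ, deriv p t = t * deriv x t := fun t ht =>
    IsStrategyProofOn.deriv_eq_mul_deriv hsp (Ici_mem_nhds ht.1) (hx t) (hpdiff t)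
  have hconst := eq_of_hasDerivAt_zero_on_Ioo hθ
    (fun t _ => (hres t).continuousAt.continuousWithinAt)
    fun t ht => by simpa only [hfoc t ht, sub_self] using hres t
  simp only [hp0, zero_mul, sub_zero, intervalIntegral.integral_same, add_zero] at hconst
  linarith

theorem payment_uniqueness
    (x p : ℝ → ℝ)
    (hsp : ∀ θ ∈ Set.Ici (0:ℝ), ∀ θ' ∈ Set.Ici (0:ℝ),
      θ * x θ' - p θ' ≤ θ * x θ - p θ)
    (hx : Differentiable ℝ x) (hpdiff : Differentiable ℝ p)
    (hp0 : p 0 = 0) (hx0 : x 0 * 0 = 0) :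
    ∀ θ ∈ Set.Ici (0:ℝ), p θ = θ * x θ - ∫ z in (0:ℝ)..θ, x z :=
  payment_uniqueness_general x p hsp hx hpdiff hp0
end

section
/- Let x be nondecreasing on [0, H] and p(θ) = θ·x(θ) − ∫₀^θ x(z) dz. If θ is a random variable on [0, H] with density f and CDF F, then the expected payment E[p(θ)] equals E[φ(θ)·x(θ)], where φ(θ) = θ − (1 − F(θ))/f(θ). -/
/-! Writing `G θ = ∫₀^θ x`, the payment is `p θ = θ x θ - G θ`, so the claim reduces to
`∫₀^H G f = ∫₀^H x (1 - F)`. Both `G` and `F` are primitives of integrable functions, hence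
absolutely continuous, and this is integration by parts together with `G 0 = 0` and `F H = 1`. -/

open Set MeasureTheory intervalIntegral

theorem IntervalIntegrable.ae_deriv_primitive_eq {f : ℝ → ℝ} {a b : ℝ}
    (hf : IntervalIntegrable f volume a b) :
    ∀ᵐ θ, θ ∈ uIoc a b → deriv (fun t ↦ ∫ z in a..t, f z) θ = f θ := by
  filter_upwards [hf.ae_hasDerivAt_integral] with θ hθ hθab
  exact (hθ (uIoc_subset_uIcc hθab) a left_mem_uIcc).deriv

theorem intervalIntegral.integral_primitive_mul_eq_sub {x f : ℝ → ℝ} {a b : ℝ}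
    (hx : IntervalIntegrable x volume a b) (hf : IntervalIntegrable f volume a b) :
    ∫ θ in a..b, (∫ z in a..θ, x z) * f θ =
      (∫ z in a..b, x z) * (∫ z in a..b, f z) - ∫ θ in a..b, x θ * ∫ z in a..θ, f z := by
  have hX := hx.absolutelyContinuousOnInterval_intervalIntegral left_mem_uIcc
  have hF := hf.absolutelyContinuousOnInterval_intervalIntegral left_mem_uIcc
  have hparts := hX.integral_mul_deriv_eq_deriv_mul hF
  rw [integral_same, zero_mul, sub_zero] at hparts
  calc ∫ θ in a..b, (∫ z in a..θ, x z) * f θ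
      = ∫ θ in a..b, (∫ z in a..θ, x z) * deriv (fun t ↦ ∫ z in a..t, f z) θ := by
        refine integral_congr_ae ?_
        filter_upwards [hf.ae_deriv_primitive_eq] with θ hθ hθab
        rw [hθ hθab]
    _ = _ := hparts
    _ = (∫ z in a..b, x z) * (∫ z in a..b, f z) - ∫ θ in a..b, x θ * ∫ z in a..θ, f z := by
        congr 1
        refine integral_congr_ae ?_
        filter_upwards [hx.ae_deriv_primitive_eq] with θ hθ hθab
        rw [hθ hθab]

theorem intervalIntegral.integral_primitive_mul_eq_integral_mul_one_sub {x f : ℝ → ℝ} {a b : ℝ}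
    (hx : IntervalIntegrable x volume a b) (hf : IntervalIntegrable f volume a b)
    (hf_total : ∫ z in a..b, f z = 1) :
    ∫ θ in a..b, (∫ z in a..θ, x z) * f θ = ∫ θ in a..b, x θ * (1 - ∫ z in a..θ, f z) := by
  have hxF : IntervalIntegrable (fun θ ↦ x θ * ∫ z in a..θ, f z) volume a b :=
    hx.mul_continuousOn
      (hf.absolutelyContinuousOnInterval_intervalIntegral left_mem_uIcc).continuousOn
  simp only [mul_one_sub]
  rw [integral_primitive_mul_eq_sub hx hf, hf_total, mul_one, integral_sub hx hxF]

theorem myerson_revenue_equivalence_general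
    (H : ℝ) (hH : 0 < H)
    (x f F p : ℝ → ℝ)
    (hf : Continuous f)
    (hfpos : ∀ θ ∈ Set.Icc 0 H, 0 < f θ)
    (hF : ∀ θ, F θ = ∫ z in (0:ℝ)..θ, f z)
    (hFH : F H = 1)
    (hp : ∀ θ, p θ = θ * x θ - ∫ z in (0:ℝ)..θ, x z)
    (hxint : IntervalIntegrable x MeasureTheory.volume 0 H) :
    (∫ θ in (0:ℝ)..H, p θ * f θ) =
      ∫ θ in (0:ℝ)..H, (θ - (1 - F θ) / f θ) * x θ * f θ := by
  have hfint : IntervalIntegrable f volume 0 H := hf.intervalIntegrable 0 H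
  have hFcont : ContinuousOn F (uIcc 0 H) :=
    funext hF ▸ (hfint.absolutelyContinuousOnInterval_intervalIntegral left_mem_uIcc).continuousOn
  have hxθf : IntervalIntegrable (fun θ ↦ θ * x θ * f θ) volume 0 H :=
    (hxint.continuousOn_mul continuousOn_id).mul_continuousOn hf.continuousOn
  have hGf : IntervalIntegrable (fun θ ↦ (∫ z in (0:ℝ)..θ, x z) * f θ) volume 0 H :=
    ((hxint.absolutelyContinuousOnInterval_intervalIntegral left_mem_uIcc).continuousOn.mul
      hf.continuousOn).intervalIntegrable
  have hx1F : IntervalIntegrable (fun θ ↦ x θ * (1 - F θ)) volume 0 H :=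
    hxint.mul_continuousOn (continuousOn_const.sub hFcont)
  have hparts : ∫ θ in (0:ℝ)..H, (∫ z in (0:ℝ)..θ, x z) * f θ =
      ∫ θ in (0:ℝ)..H, x θ * (1 - F θ) := by
    simp only [hF]
    exact integral_primitive_mul_eq_integral_mul_one_sub hxint hfint (hF H ▸ hFH)
  calc ∫ θ in (0:ℝ)..H, p θ * f θ
      = ∫ θ in (0:ℝ)..H, (θ * x θ * f θ - (∫ z in (0:ℝ)..θ, x z) * f θ) := by
        simp only [hp, sub_mul]
    _ = ∫ θ in (0:ℝ)..H, (θ * x θ * f θ - x θ * (1 - F θ)) := by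
        rw [integral_sub hxθf hGf, integral_sub hxθf hx1F, hparts]
    _ = ∫ θ in (0:ℝ)..H, (θ - (1 - F θ) / f θ) * x θ * f θ := by
        refine integral_congr fun θ hθ ↦ ?_
        rw [uIcc_of_le hH.le] at hθ
        field_simp [(hfpos θ hθ).ne']

theorem myerson_revenue_equivalence
    (H : ℝ) (hH : 0 < H)
    (x f F p : ℝ → ℝ)
    (hmono : MonotoneOn x (Set.Icc 0 H))
    (hf : Continuous f)
    (hfpos : ∀ θ ∈ Set.Icc 0 H, 0 < f θ)
    (hF : ∀ θ, F θ = ∫ z in (0:ℝ)..θ, f z)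
    (hFH : F H = 1)
    (hp : ∀ θ, p θ = θ * x θ - ∫ z in (0:ℝ)..θ, x z)
    (hxint : IntervalIntegrable x MeasureTheory.volume 0 H) :
    (∫ θ in (0:ℝ)..H, p θ * f θ) =
      ∫ θ in (0:ℝ)..H, (θ - (1 - F θ) / f θ) * x θ * f θ :=
  myerson_revenue_equivalence_general H hH x f F p hf hfpos hF hFH hp hxint
end

section
/- Let M be a mechanism on the exploit model that is strategy-proof and individually rational, where for each offender i the disclosure time t_i assigned by M does not depend on i's own report. Define M' by setting each offender's disclosure time to 0 while keeping all defenders' disclosure times and all payments unchanged. Then M' is strategy-proof and individually rational, and M' has the same revenue as M on every type profile. -/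
/-- A profile of reported valuation densities is valid if every report is a
nonnegative function that is interval-integrable on `[0,1]`. -/
def ValidProfile {ι : Type*} (R : ι → ℝ → ℝ) : Prop :=
  ∀ i, (∀ z, 0 ≤ R i z) ∧ IntervalIntegrable (R i) MeasureTheory.volume 0 1

/- An offender's valuation under `M'` exceeds her valuation under `M` by `∫₀^{t_i} v_i`.
Since `t_i` does not depend on her own report, neither does this gain, so deviations pay
exactly as much under `M'` as under `M`, while truthful utility only grows. -/

open Set intervalIntegral MeasureTheory

theorem IntervalIntegrable.integral_add_adjacent_of_mem_uIcc {w : ℝ → ℝ} {a b s e : ℝ}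
    (hw : IntervalIntegrable w volume a b) (hs : s ∈ uIcc a b) (he : e ∈ uIcc a b) :
    ∫ z in a..e, w z = (∫ z in a..s, w z) + ∫ z in s..e, w z :=
  (integral_add_adjacent_intervals (hw.mono_set (uIcc_subset_uIcc left_mem_uIcc hs))
    (hw.mono_set (uIcc_subset_uIcc hs he))).symm

theorem proposition_one
    {ι : Type*} [Fintype ι] [DecidableEq ι]
    (O D : Set ι) (hOD : ∀ i, i ∈ O ∨ i ∈ D)
    -- mechanism M: disclosure times for offenders, fixing time, payments
    (t : (ι → ℝ → ℝ) → ι → ℝ)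
    (tend : (ι → ℝ → ℝ) → ℝ)
    (pay : (ι → ℝ → ℝ) → ι → ℝ)
    (htrange : ∀ R i, i ∈ O → t R i ∈ Set.Icc 0 (tend R))
    (htendrange : ∀ R, tend R ∈ Set.Icc (0:ℝ) 1)
    -- utility under M of agent i with true density w when the report profile is R
    (u : (ι → ℝ → ℝ) → ι → (ℝ → ℝ) → ℝ)
    (hu_off : ∀ R i w, i ∈ O → u R i w = (∫ z in (t R i)..(tend R), w z) - pay R i)
    (hu_def : ∀ R i w, i ∈ D → u R i w = (∫ z in (tend R)..(1:ℝ), w z) - pay R i)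
    -- M is strategy-proof and individually rational on valid profiles
    (hSP : ∀ R, ValidProfile R → ∀ i w', (∀ z, 0 ≤ w' z) →
      IntervalIntegrable w' MeasureTheory.volume 0 1 →
      u (Function.update R i w') i (R i) ≤ u R i (R i))
    (hIR : ∀ R, ValidProfile R → ∀ i, 0 ≤ u R i (R i))
    -- straight-forwardness: an offender's disclosure time is independent of her own report
    (hSF : ∀ R i, i ∈ O → ∀ w', t (Function.update R i w') i = t R i)
    -- mechanism M': all offenders are disclosed the exploit at time 0;
    -- fixing time and payments are unchanged
    (t' : (ι → ℝ → ℝ) → ι → ℝ) (ht' : ∀ R i, t' R i = 0)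
    (tend' : (ι → ℝ → ℝ) → ℝ) (htend' : ∀ R, tend' R = tend R)
    (pay' : (ι → ℝ → ℝ) → ι → ℝ) (hpay' : ∀ R i, pay' R i = pay R i)
    -- utility under M'
    (u' : (ι → ℝ → ℝ) → ι → (ℝ → ℝ) → ℝ)
    (hu'_off : ∀ R i w, i ∈ O → u' R i w = (∫ z in (t' R i)..(tend' R), w z) - pay' R i)
    (hu'_def : ∀ R i w, i ∈ D → u' R i w = (∫ z in (tend' R)..(1:ℝ), w z) - pay' R i) :
    -- M' is strategy-proof
    (∀ R, ValidProfile R → ∀ i w', (∀ z, 0 ≤ w' z) →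
      IntervalIntegrable w' MeasureTheory.volume 0 1 →
      u' (Function.update R i w') i (R i) ≤ u' R i (R i)) ∧
    -- M' is individually rational
    (∀ R, ValidProfile R → ∀ i, 0 ≤ u' R i (R i)) ∧
    -- M' has the same revenue as M on every profile
    (∀ R, ∑ i, pay' R i = ∑ i, pay R i) := by
  have offender_gain : ∀ R i w, i ∈ O → IntervalIntegrable w volume 0 1 →
      u' R i w = u R i w + ∫ z in (0:ℝ)..t R i, w z := by
    intro R i w hi hw
    have hmem : ∀ x ∈ Icc (0:ℝ) 1, x ∈ uIcc (0:ℝ) 1 := fun x hx => Icc_subset_uIcc hx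
    have hsplit := hw.integral_add_adjacent_of_mem_uIcc
      (hmem _ ⟨(htrange R i hi).1, (htrange R i hi).2.trans (htendrange R).2⟩)
      (hmem _ (htendrange R))
    rw [hu'_off R i w hi, hu_off R i w hi, ht', htend', hpay', hsplit]
    ring
  have defender_same : ∀ R i w, i ∈ D → u' R i w = u R i w := by
    intro R i w hi
    rw [hu'_def R i w hi, hu_def R i w hi, htend', hpay']
  refine ⟨fun R hR i w' hw' hw'int => ?_, fun R hR i => ?_, fun R => by simp only [hpay']⟩
  · rcases hOD i with hi | hi
    · rw [offender_gain _ i _ hi (hR i).2, offender_gain _ i _ hi (hR i).2, hSF R i hi]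
      exact add_le_add_left (hSP R hR i w' hw' hw'int) _
    · rw [defender_same _ i _ hi, defender_same _ i _ hi]
      exact hSP R hR i w' hw' hw'int
  · rcases hOD i with hi | hi
    · rw [offender_gain _ i _ hi (hR i).2]
      exact add_nonneg (hIR R hR i)
        (integral_nonneg (htrange R i hi).1 fun z _ => (hR i).1 z)
    · rw [defender_same _ i _ hi]
      exact hIR R hR i
end
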